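/- Fix p_gen, p_swap ∈ (0,1], and let (f_n) be the waiting-time distributions of the SWAP-ONLY protocol with cumulative sums F_n. Then for every n ≥ 0, the mean waiting time of the 2^n-segment SWAP-ONLY repeater chain satisfies E[f_n] = Σ_{t=1}^{∞} (1 − F_n(t−1)) ≤ (2/p_swap)^n · (1/p_gen). -/

import Mathlib

noncomputable section

namespace RepeaterChain

/-- Convolution of two functions on `ℕ`: `(a*b)(t) = Σ_{s=0}^{t} a(s)·b(t−s)`. -/
def conv (a b : ℕ → ℝ) : ℕ → ℝ := fun t => ∑ s ∈ Finset.range (t + 1), a s * b (t - s)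

/-- `convPow m k` is the `k`-fold convolution `m^{*k}` of `m` with itself
(`convPow m 0` is the convolution identity, the delta at `0`, and `convPow m 1 = m`). -/
def convPow (m : ℕ → ℝ) : ℕ → ℕ → ℝ
  | 0 => fun t => if t = 0 then 1 else 0
  | k + 1 => conv (convPow m k) m

/-- Cumulative sums: `F(t) = Σ_{s=0}^{t} f(s)`. -/
def cum (f : ℕ → ℝ) : ℕ → ℝ := fun t => ∑ s ∈ Finset.range (t + 1), f s

/-- The geometric distribution with parameter `p`, supported on `{1, 2, …}`:
`f(0) = 0` and `f(t) = p·(1−p)^{t−1}` for `t ≥ 1`. -/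
def geomPMF (p : ℝ) : ℕ → ℝ := fun t => if t = 0 then 0 else p * (1 - p) ^ (t - 1)

/-- Distribution of the maximum of two i.i.d. copies of a variable with pmf `f`:
`m(0) = 0` and `m(t) = F(t)² − F(t−1)²` for `t ≥ 1`. -/
def maxPMF (f : ℕ → ℝ) : ℕ → ℝ :=
  fun t => if t = 0 then 0 else cum f t ^ 2 - cum f (t - 1) ^ 2

/-- Distribution of the geometric compound sum with parameter `p` of summands with pmf `m`:
`t ↦ Σ_{k=1}^{∞} p·(1−p)^{k−1}·m^{*k}(t)` (the sum over `k ≥ 1` written via `k ↦ k + 1`). -/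
def geomCompound (p : ℝ) (m : ℕ → ℝ) : ℕ → ℝ :=
  fun t => ∑' k : ℕ, p * (1 - p) ^ k * convPow m (k + 1) t

/-- The waiting-time distribution `f_n` of `T_n` for the SWAP-ONLY protocol on a `2^n`-segment
repeater chain: `f_0` is geometric with parameter `p_gen`, and `f_{n+1}` is the geometric compound
sum (parameter `p_swap`) of copies of the maximum of two i.i.d. copies of `T_n`. -/
def fSwap (pgen pswap : ℝ) : ℕ → ℕ → ℝ
  | 0 => geomPMF pgen
  | n + 1 => geomCompound pswap (maxPMF (fSwap pgen pswap n))

/-- The waiting-time distribution `f_n^up` of the dominating sequential variant `T_n^upper`,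
in which the two links at every swap level are produced sequentially rather than in parallel:
`f_0^up = f_0`, and `f_{n+1}^up` is the geometric compound sum (parameter `p_swap`) of copies of
the sum of two i.i.d. copies of `T_n^upper`. -/
def fUp (pgen pswap : ℝ) : ℕ → ℕ → ℝ
  | 0 => geomPMF pgen
  | n + 1 => geomCompound pswap (conv (fUp pgen pswap n) (fUp pgen pswap n))

end RepeaterChain

/-! Lift every distribution to `ℝ≥0∞`, where all series converge and can be exchanged. The mean of
a `k`-fold convolution of a probability distribution is `k` times its mean, so the geometric
compound sum with parameter `p` multiplies the mean by `Σₖ p (1 - p)ᵏ (k + 1) = 1 / p`. The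
maximum of two i.i.d. copies has pmf `F(t)² - F(t-1)² = f(t) (F(t) + F(t-1)) ≤ 2 f(t)`, so its
mean is at most twice the mean. By induction `E[f_n] ≤ (2 / p_swap)ⁿ / p_gen`, and the tail-sum
formula `Σₜ t f(t) = Σₜ (1 - F(t))` converts this into the statement. -/

open ENNReal Finset Filter Topology

theorem ENNReal.tsum_mul_tsum_eq_tsum_sum_antidiagonal (A B : ℕ → ℝ≥0∞) :
    (∑' t, A t) * ∑' t, B t = ∑' t, ∑ kl ∈ antidiagonal t, A kl.1 * B kl.2 := by
  calc (∑' t, A t) * ∑' t, B t = ∑' kl : ℕ × ℕ, A kl.1 * B kl.2 := by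
        rw [ENNReal.tsum_prod', ← ENNReal.tsum_mul_right]
        exact tsum_congr fun k => ENNReal.tsum_mul_left.symm
    _ = ∑' x : Σ t : ℕ, antidiagonal t, A x.2.1.1 * B x.2.1.2 :=
        (HasAntidiagonal.sigmaAntidiagonalEquivProd.tsum_eq _).symm
    _ = ∑' t, ∑ kl ∈ antidiagonal t, A kl.1 * B kl.2 := by
        rw [ENNReal.tsum_sigma']
        exact tsum_congr fun t => Finset.tsum_subtype (antidiagonal t) (fun kl => A kl.1 * B kl.2)

namespace RepeaterChain

section Convolution

variable (A B : ℕ → ℝ≥0∞)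

def econv : ℕ → ℝ≥0∞ := fun t => ∑ s ∈ range (t + 1), A s * B (t - s)

def econvPow : ℕ → ℕ → ℝ≥0∞
  | 0 => fun t => if t = 0 then 1 else 0
  | k + 1 => econv (econvPow k) A

def emean : ℝ≥0∞ := ∑' t : ℕ, (t : ℝ≥0∞) * A t

lemma econv_eq_sum_antidiagonal (t : ℕ) :
    econv A B t = ∑ kl ∈ antidiagonal t, A kl.1 * B kl.2 :=
  (Nat.sum_antidiagonal_eq_sum_range_succ (fun k l => A k * B l) t).symm

lemma tsum_econv : ∑' t, econv A B t = (∑' t, A t) * ∑' t, B t := by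
  simp only [econv_eq_sum_antidiagonal]
  exact (ENNReal.tsum_mul_tsum_eq_tsum_sum_antidiagonal A B).symm

lemma emean_econv : emean (econv A B) = emean A * ∑' t, B t + (∑' t, A t) * emean B := by
  have hsplit : ∀ t : ℕ, (t : ℝ≥0∞) * econv A B t =
      ∑ kl ∈ antidiagonal t, kl.1 * A kl.1 * B kl.2 +
        ∑ kl ∈ antidiagonal t, A kl.1 * (kl.2 * B kl.2) := by
    intro t
    rw [econv_eq_sum_antidiagonal, mul_sum, ← sum_add_distrib]
    refine sum_congr rfl fun kl hkl => ?_
    rw [← mem_antidiagonal.mp hkl]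
    push_cast
    ring
  simp only [emean, hsplit, ENNReal.tsum_add]
  rw [ENNReal.tsum_mul_tsum_eq_tsum_sum_antidiagonal, ENNReal.tsum_mul_tsum_eq_tsum_sum_antidiagonal]

lemma tsum_econvPow (k : ℕ) : ∑' t, econvPow A k t = (∑' t, A t) ^ k := by
  induction k with
  | zero => simp [econvPow]
  | succ k ih => rw [econvPow, tsum_econv, ih, pow_succ]

variable {A}

lemma emean_econvPow (hA : ∑' t, A t = 1) (k : ℕ) :
    emean (econvPow A k) = k * emean A := by
  induction k with
  | zero =>
    simp only [emean, econvPow, CharP.cast_eq_zero, zero_mul]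
    exact ENNReal.tsum_eq_zero.mpr fun t => by split_ifs with h <;> simp [h]
  | succ k ih =>
    rw [econvPow, emean_econv, ih, hA, tsum_econvPow, hA]
    push_cast
    ring

end Convolution

lemma tsum_add_one_mul_pow (x : ℝ≥0∞) : ∑' k : ℕ, ((k : ℝ≥0∞) + 1) * x ^ k = (1 - x)⁻¹ ^ 2 := by
  have hconv : ∀ t : ℕ, econv (fun k => x ^ k) (fun k => x ^ k) t = ((t : ℝ≥0∞) + 1) * x ^ t := by
    intro t
    rw [econv_eq_sum_antidiagonal, sum_congr rfl fun kl hkl => by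
      rw [← pow_add, mem_antidiagonal.mp hkl], sum_const, Nat.card_antidiagonal, nsmul_eq_mul]
    push_cast
    rfl
  simp only [← hconv, tsum_econv, ENNReal.tsum_geometric, sq]

section GeometricCompound

variable {P : ℝ≥0∞}

def egeomCompound (P : ℝ≥0∞) (M : ℕ → ℝ≥0∞) : ℕ → ℝ≥0∞ :=
  fun t => ∑' k : ℕ, P * (1 - P) ^ k * econvPow M (k + 1) t

lemma mul_tsum_one_sub_pow (hP0 : P ≠ 0) (hP1 : P ≤ 1) : P * ∑' k : ℕ, (1 - P) ^ k = 1 := by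
  rw [ENNReal.tsum_geometric, ENNReal.sub_sub_cancel one_ne_top hP1,
    ENNReal.mul_inv_cancel hP0 (ne_top_of_le_ne_top one_ne_top hP1)]

lemma mul_tsum_add_one_mul_one_sub_pow (hP0 : P ≠ 0) (hP1 : P ≤ 1) :
    P * ∑' k : ℕ, ((k : ℝ≥0∞) + 1) * (1 - P) ^ k = P⁻¹ := by
  rw [tsum_add_one_mul_pow, ENNReal.sub_sub_cancel one_ne_top hP1, sq, ← mul_assoc,
    ENNReal.mul_inv_cancel hP0 (ne_top_of_le_ne_top one_ne_top hP1), one_mul]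

variable {M : ℕ → ℝ≥0∞}

lemma tsum_egeomCompound (hP0 : P ≠ 0) (hP1 : P ≤ 1) (hM : ∑' t, M t = 1) :
    ∑' t, egeomCompound P M t = 1 := by
  simp only [egeomCompound]
  rw [ENNReal.tsum_comm]
  simp only [ENNReal.tsum_mul_left, tsum_econvPow, hM, one_pow, mul_one]
  exact mul_tsum_one_sub_pow hP0 hP1

lemma emean_egeomCompound (hP0 : P ≠ 0) (hP1 : P ≤ 1) (hM : ∑' t, M t = 1) :
    emean (egeomCompound P M) = P⁻¹ * emean M := by
  calc emean (egeomCompound P M)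
      = ∑' k : ℕ, P * (1 - P) ^ k * emean (econvPow M (k + 1)) := by
        simp only [emean, egeomCompound, ← ENNReal.tsum_mul_left]
        rw [ENNReal.tsum_comm]
        exact tsum_congr fun k => tsum_congr fun t => by ring
    _ = (P * ∑' k : ℕ, ((k : ℝ≥0∞) + 1) * (1 - P) ^ k) * emean M := by
        simp only [emean_econvPow hM, ← ENNReal.tsum_mul_left, ← ENNReal.tsum_mul_right]
        exact tsum_congr fun k => by push_cast; ring
    _ = P⁻¹ * emean M := by rw [mul_tsum_add_one_mul_one_sub_pow hP0 hP1]

end GeometricCompound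

def ofRealFun (f : ℕ → ℝ) : ℕ → ℝ≥0∞ := fun t => ENNReal.ofReal (f t)

-- The mass condition is stated after lifting to `ℝ≥0∞`, where it also encodes summability.
structure IsPMF (f : ℕ → ℝ) : Prop where
  nonneg : ∀ t, 0 ≤ f t
  tsum_ofRealFun : ∑' t, ofRealFun f t = 1

section Lift

variable {a b f m : ℕ → ℝ} {p : ℝ}

lemma conv_nonneg (ha : ∀ t, 0 ≤ a t) (hb : ∀ t, 0 ≤ b t) (t : ℕ) : 0 ≤ conv a b t :=
  sum_nonneg fun s _ => mul_nonneg (ha s) (hb _)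

lemma convPow_nonneg (hm : ∀ t, 0 ≤ m t) (k t : ℕ) : 0 ≤ convPow m k t := by
  induction k generalizing t with
  | zero => simp only [convPow]; split_ifs <;> norm_num
  | succ k ih => exact conv_nonneg ih hm t

lemma ofRealFun_conv (ha : ∀ t, 0 ≤ a t) (hb : ∀ t, 0 ≤ b t) :
    ofRealFun (conv a b) = econv (ofRealFun a) (ofRealFun b) := by
  funext t
  rw [ofRealFun, conv, ENNReal.ofReal_sum_of_nonneg fun s _ => mul_nonneg (ha s) (hb _)]
  exact sum_congr rfl fun s _ => ENNReal.ofReal_mul (ha s)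

lemma ofRealFun_convPow (hm : ∀ t, 0 ≤ m t) (k : ℕ) :
    ofRealFun (convPow m k) = econvPow (ofRealFun m) k := by
  induction k with
  | zero => funext t; simp only [ofRealFun, convPow, econvPow]; split_ifs <;> simp
  | succ k ih => rw [convPow, econvPow, ofRealFun_conv (convPow_nonneg hm k) hm, ih]

lemma ofReal_cum (hf : ∀ t, 0 ≤ f t) (t : ℕ) :
    ENNReal.ofReal (cum f t) = ∑ s ∈ range (t + 1), ofRealFun f s :=
  ENNReal.ofReal_sum_of_nonneg fun s _ => hf s

lemma IsPMF.cum_le_one (hf : IsPMF f) (t : ℕ) : cum f t ≤ 1 := by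
  have h := ENNReal.sum_le_tsum (f := ofRealFun f) (range (t + 1))
  rwa [hf.tsum_ofRealFun, ← ofReal_cum hf.nonneg, ENNReal.ofReal_le_one] at h

lemma geomCompound_term_nonneg (hp0 : 0 ≤ p) (hp1 : p ≤ 1) (hm : ∀ t, 0 ≤ m t) (t k : ℕ) :
    0 ≤ p * (1 - p) ^ k * convPow m (k + 1) t :=
  mul_nonneg (mul_nonneg hp0 (pow_nonneg (by linarith) _)) (convPow_nonneg hm _ t)

lemma ofRealFun_geomCompound (hp0 : 0 < p) (hp1 : p ≤ 1) (hm : IsPMF m) :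
    ofRealFun (geomCompound p m) = egeomCompound (ENNReal.ofReal p) (ofRealFun m) := by
  have hP0 : ENNReal.ofReal p ≠ 0 := by simpa using hp0
  have hP1 : ENNReal.ofReal p ≤ 1 := ENNReal.ofReal_le_one.mpr hp1
  have hterm_nonneg := geomCompound_term_nonneg hp0.le hp1 hm.nonneg
  have hterm : ∀ t k : ℕ, ENNReal.ofReal (p * (1 - p) ^ k * convPow m (k + 1) t) =
      ENNReal.ofReal p * (1 - ENNReal.ofReal p) ^ k * econvPow (ofRealFun m) (k + 1) t := by
    intro t k
    rw [ENNReal.ofReal_mul (mul_nonneg hp0.le (pow_nonneg (by linarith) _)),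
      ENNReal.ofReal_mul hp0.le, ENNReal.ofReal_pow (by linarith), ENNReal.ofReal_sub _ hp0.le,
      ENNReal.ofReal_one, ← ofRealFun_convPow hm.nonneg]
    rfl
  funext t
  have hfinite : egeomCompound (ENNReal.ofReal p) (ofRealFun m) t ≠ ∞ :=
    ne_top_of_le_ne_top one_ne_top <|
      (tsum_egeomCompound hP0 hP1 hm.tsum_ofRealFun) ▸ ENNReal.le_tsum t
  have hsummable : Summable fun k : ℕ => p * (1 - p) ^ k * convPow m (k + 1) t :=
    (ENNReal.summable_toReal (by simpa only [egeomCompound, ← hterm] using hfinite)).congr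
      fun k => ENNReal.toReal_ofReal (hterm_nonneg t k)
  rw [ofRealFun, geomCompound, ENNReal.ofReal_tsum_of_nonneg (hterm_nonneg t) hsummable]
  exact tsum_congr (hterm t)

lemma isPMF_geomCompound (hp0 : 0 < p) (hp1 : p ≤ 1) (hm : IsPMF m) :
    IsPMF (geomCompound p m) where
  nonneg t := tsum_nonneg (geomCompound_term_nonneg hp0.le hp1 hm.nonneg t)
  tsum_ofRealFun := by
    rw [ofRealFun_geomCompound hp0 hp1 hm]
    exact tsum_egeomCompound (by simpa using hp0) (ENNReal.ofReal_le_one.mpr hp1)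
      hm.tsum_ofRealFun

lemma emean_ofRealFun_geomCompound (hp0 : 0 < p) (hp1 : p ≤ 1) (hm : IsPMF m) :
    emean (ofRealFun (geomCompound p m)) = (ENNReal.ofReal p)⁻¹ * emean (ofRealFun m) := by
  rw [ofRealFun_geomCompound hp0 hp1 hm]
  exact emean_egeomCompound (by simpa using hp0) (ENNReal.ofReal_le_one.mpr hp1)
    hm.tsum_ofRealFun

end Lift

section Geometric

variable {p : ℝ}

lemma ofRealFun_geomPMF_succ (hp0 : 0 ≤ p) (hp1 : p ≤ 1) (t : ℕ) :
    ofRealFun (geomPMF p) (t + 1) = ENNReal.ofReal p * (1 - ENNReal.ofReal p) ^ t := by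
  rw [ofRealFun, geomPMF, if_neg t.succ_ne_zero, Nat.add_sub_cancel, ENNReal.ofReal_mul hp0,
    ENNReal.ofReal_pow (by linarith), ENNReal.ofReal_sub _ hp0, ENNReal.ofReal_one]

lemma isPMF_geomPMF (hp0 : 0 < p) (hp1 : p ≤ 1) : IsPMF (geomPMF p) where
  nonneg t := by
    unfold geomPMF
    split_ifs
    exacts [le_rfl, mul_nonneg hp0.le (pow_nonneg (by linarith) _)]
  tsum_ofRealFun := by
    rw [tsum_eq_zero_add' ENNReal.summable]
    simp only [ofRealFun_geomPMF_succ hp0.le hp1, ENNReal.tsum_mul_left]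
    simp only [ofRealFun, geomPMF, if_pos, ENNReal.ofReal_zero, zero_add]
    exact mul_tsum_one_sub_pow (by simpa using hp0) (ENNReal.ofReal_le_one.mpr hp1)

lemma emean_ofRealFun_geomPMF (hp0 : 0 < p) (hp1 : p ≤ 1) :
    emean (ofRealFun (geomPMF p)) = (ENNReal.ofReal p)⁻¹ := by
  rw [emean, tsum_eq_zero_add' ENNReal.summable]
  simp only [ofRealFun_geomPMF_succ hp0.le hp1, CharP.cast_eq_zero, zero_mul, zero_add]
  rw [← mul_tsum_add_one_mul_one_sub_pow (by simpa using hp0) (ENNReal.ofReal_le_one.mpr hp1),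
    ← ENNReal.tsum_mul_left]
  exact tsum_congr fun t => by push_cast; ring

end Geometric

section Maximum

variable {f : ℕ → ℝ}

lemma cum_succ (t : ℕ) : cum f (t + 1) = cum f t + f (t + 1) := sum_range_succ f (t + 1)

lemma cum_nonneg (hf : ∀ t, 0 ≤ f t) (t : ℕ) : 0 ≤ cum f t := sum_nonneg fun s _ => hf s

lemma maxPMF_succ (t : ℕ) : maxPMF f (t + 1) = f (t + 1) * (cum f (t + 1) + cum f t) := by
  rw [maxPMF, if_neg t.succ_ne_zero, Nat.add_sub_cancel, cum_succ]
  ring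

lemma maxPMF_nonneg (hf : ∀ t, 0 ≤ f t) (t : ℕ) : 0 ≤ maxPMF f t := by
  rcases t with _ | t
  · simp [maxPMF]
  · rw [maxPMF_succ]
    exact mul_nonneg (hf _) (add_nonneg (cum_nonneg hf _) (cum_nonneg hf _))

lemma IsPMF.maxPMF_le (hf : IsPMF f) (t : ℕ) : maxPMF f t ≤ 2 * f t := by
  rcases t with _ | t
  · simpa [maxPMF] using hf.nonneg 0
  · rw [maxPMF_succ, mul_comm 2]
    have := hf.cum_le_one t
    have := hf.cum_le_one (t + 1)
    exact mul_le_mul_of_nonneg_left (by linarith) (hf.nonneg _)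

lemma cum_maxPMF (hf0 : f 0 = 0) (t : ℕ) : cum (maxPMF f) t = cum f t ^ 2 := by
  induction t with
  | zero => simp [cum, maxPMF, hf0]
  | succ t ih => rw [cum_succ, ih, maxPMF_succ, cum_succ]; ring

lemma tendsto_ofReal_cum (hf : ∀ t, 0 ≤ f t) :
    Tendsto (fun t => ENNReal.ofReal (cum f t)) atTop (𝓝 (∑' t, ofRealFun f t)) := by
  simp only [ofReal_cum hf]
  exact (tendsto_add_atTop_iff_nat 1).mpr (ENNReal.tendsto_nat_tsum _)

lemma isPMF_maxPMF (hf : IsPMF f) (hf0 : f 0 = 0) : IsPMF (maxPMF f) where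
  nonneg := maxPMF_nonneg hf.nonneg
  tsum_ofRealFun := by
    refine tendsto_nhds_unique (tendsto_ofReal_cum (maxPMF_nonneg hf.nonneg)) ?_
    have hsq := ENNReal.Tendsto.pow (n := 2) (tendsto_ofReal_cum hf.nonneg)
    rw [hf.tsum_ofRealFun, one_pow] at hsq
    refine hsq.congr fun t => ?_
    rw [cum_maxPMF hf0, ENNReal.ofReal_pow (cum_nonneg hf.nonneg t)]

lemma IsPMF.emean_ofRealFun_maxPMF_le (hf : IsPMF f) :
    emean (ofRealFun (maxPMF f)) ≤ 2 * emean (ofRealFun f) := by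
  rw [emean, emean, ← ENNReal.tsum_mul_left]
  refine ENNReal.tsum_le_tsum fun t => ?_
  rw [mul_left_comm]
  gcongr
  rw [ofRealFun, ofRealFun, ← ENNReal.ofReal_ofNat 2, ← ENNReal.ofReal_mul zero_le_two]
  exact ENNReal.ofReal_le_ofReal (hf.maxPMF_le t)

end Maximum

section TailSum

lemma sum_range_add_tsum_indicator_Ioi (A : ℕ → ℝ≥0∞) (t : ℕ) :
    ∑ s ∈ range (t + 1), A s + ∑' s, (Set.Ioi t).indicator A s = ∑' s, A s := by
  have hcompl : ((range (t + 1) : Set ℕ))ᶜ = Set.Ioi t := by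
    ext s
    simp
  rw [← ENNReal.sum_add_tsum_compl (range (t + 1)) A, _root_.tsum_subtype, hcompl]

lemma tsum_tsum_indicator_Ioi (A : ℕ → ℝ≥0∞) :
    ∑' t, ∑' s, (Set.Ioi t).indicator A s = emean A := by
  rw [ENNReal.tsum_comm]
  refine tsum_congr fun s => ?_
  calc ∑' t, (Set.Ioi t).indicator A s = ∑ t ∈ range s, A s := by
        rw [tsum_eq_sum (s := range s) fun t ht => by simp_all]
        exact sum_congr rfl fun t ht => Set.indicator_of_mem (by simpa using ht) _
    _ = s * A s := by rw [sum_const, card_range, nsmul_eq_mul]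

lemma IsPMF.hasSum_one_sub_cum {f : ℕ → ℝ} (hf : IsPMF f) (hmean : emean (ofRealFun f) ≠ ∞) :
    HasSum (fun t => 1 - cum f t) (emean (ofRealFun f)).toReal := by
  set tail := fun t => ∑' s, (Set.Ioi t).indicator (ofRealFun f) s
  have htail : ∀ t, ENNReal.ofReal (cum f t) + tail t = 1 := fun t => by
    rw [ofReal_cum hf.nonneg, sum_range_add_tsum_indicator_Ioi, hf.tsum_ofRealFun]
  have hfinite : ∀ t, tail t ≠ ∞ := fun t =>
    ne_top_of_le_ne_top one_ne_top (htail t ▸ le_add_self)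
  have hreal : ∀ t, 1 - cum f t = (tail t).toReal := fun t => by
    have := congrArg ENNReal.toReal (htail t)
    rw [ENNReal.toReal_add ofReal_ne_top (hfinite t),
      ENNReal.toReal_ofReal (cum_nonneg hf.nonneg t), toReal_one] at this
    linarith
  rw [← tsum_tsum_indicator_Ioi] at hmean ⊢
  rw [ENNReal.tsum_toReal_eq hfinite, funext hreal]
  exact (ENNReal.summable_toReal hmean).hasSum

end TailSum

section SwapOnly

lemma fSwap_zero (pgen pswap : ℝ) (n : ℕ) : fSwap pgen pswap n 0 = 0 := by
  cases n <;> simp [fSwap, geomPMF, geomCompound, convPow, conv, maxPMF]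

variable {pgen pswap : ℝ}

lemma isPMF_fSwap (hgen0 : 0 < pgen) (hgen1 : pgen ≤ 1) (hswap0 : 0 < pswap)
    (hswap1 : pswap ≤ 1) (n : ℕ) : IsPMF (fSwap pgen pswap n) := by
  induction n with
  | zero => exact isPMF_geomPMF hgen0 hgen1
  | succ n ih => exact isPMF_geomCompound hswap0 hswap1 (isPMF_maxPMF ih (fSwap_zero _ _ n))

lemma emean_fSwap_le (hgen0 : 0 < pgen) (hgen1 : pgen ≤ 1) (hswap0 : 0 < pswap)
    (hswap1 : pswap ≤ 1) (n : ℕ) :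
    emean (ofRealFun (fSwap pgen pswap n)) ≤ ENNReal.ofReal ((2 / pswap) ^ n * (1 / pgen)) := by
  induction n with
  | zero =>
    rw [fSwap, emean_ofRealFun_geomPMF hgen0 hgen1, pow_zero, one_mul, one_div,
      ENNReal.ofReal_inv_of_pos hgen0]
  | succ n ih =>
    have hf := isPMF_fSwap hgen0 hgen1 hswap0 hswap1 n
    calc emean (ofRealFun (fSwap pgen pswap (n + 1)))
        = (ENNReal.ofReal pswap)⁻¹ * emean (ofRealFun (maxPMF (fSwap pgen pswap n))) :=
          emean_ofRealFun_geomCompound hswap0 hswap1 (isPMF_maxPMF hf (fSwap_zero _ _ n))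
      _ ≤ (ENNReal.ofReal pswap)⁻¹ * (2 * ENNReal.ofReal ((2 / pswap) ^ n * (1 / pgen))) := by
          gcongr
          exact hf.emean_ofRealFun_maxPMF_le.trans (by gcongr)
      _ = ENNReal.ofReal ((2 / pswap) ^ (n + 1) * (1 / pgen)) := by
          rw [← ENNReal.ofReal_inv_of_pos hswap0, ← ENNReal.ofReal_ofNat 2,
            ← ENNReal.ofReal_mul zero_le_two, ← ENNReal.ofReal_mul (by positivity)]
          congr 1
          ring

end SwapOnly

end RepeaterChain

open RepeaterChain

/-- The mean waiting time of the `2^n`-segment SWAP-ONLY repeater chain is finite and satisfies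
`E[f_n] = Σ_{t=1}^{∞} (1 − F_n(t−1)) ≤ (2/p_swap)^n · (1/p_gen)`. -/
theorem mean_fSwap_le (pgen pswap : ℝ)
    (hgen0 : 0 < pgen) (hgen1 : pgen ≤ 1) (hswap0 : 0 < pswap) (hswap1 : pswap ≤ 1)
    (n : ℕ) :
    Summable (fun t : ℕ => 1 - cum (fSwap pgen pswap n) t) ∧
    ∑' t : ℕ, (1 - cum (fSwap pgen pswap n) t) ≤ (2 / pswap) ^ n * (1 / pgen) := by
  have hmean := emean_fSwap_le hgen0 hgen1 hswap0 hswap1 n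
  have hsum := (isPMF_fSwap hgen0 hgen1 hswap0 hswap1 n).hasSum_one_sub_cum
    (ne_top_of_le_ne_top ofReal_ne_top hmean)
  exact ⟨hsum.summable, hsum.tsum_eq ▸ ENNReal.toReal_le_of_le_ofReal (by positivity) hmean⟩
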